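/- Let n ≥ 2, α ∈ (0, 1), D > 0, set C_α = (1 + 2D²)/(α(1 − α)), and define w_α(x) = xₙ^α (|x′|² − C_α) for x = (x′, xₙ) ∈ ℝⁿ with xₙ > 0. Then: (a) for every x with xₙ > 0, det D²w_α(x) = 2^{n−1} xₙ^{nα−2} [α(1−α)C_α − (α² + α)|x′|²]; (b) for every x with xₙ > 0 and |x′| ≤ D, det D²w_α(x) ≥ xₙ^{nα−2}; and (c) w_α is convex on the open convex set {x : xₙ > 0, |x′| < D}. -/

import Mathlib

open Metric MeasureTheory Real

noncomputable def hessianMatrix {n : ℕ} (u : EuclideanSpace ℝ (Fin n) → ℝ)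
    (x : EuclideanSpace ℝ (Fin n)) : Matrix (Fin n) (Fin n) ℝ :=
  Matrix.of fun i j =>
    fderiv ℝ (fun y => fderiv ℝ u y (EuclideanSpace.single j 1)) x (EuclideanSpace.single i 1)

noncomputable def hessianDet {n : ℕ} (u : EuclideanSpace ℝ (Fin n) → ℝ)
    (x : EuclideanSpace ℝ (Fin n)) : ℝ := (hessianMatrix u x).det

/-!
Write `t = xₙ` and `x' = P x` for the projection `P` killing the last coordinate. The Hessian
of `w = t^α (|x'|² - C)` is an arrowhead matrix: `2 t^α` on the diagonal of the `x'`-block,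
border `2α t^(α-1) x'` and corner `α(α-1) t^(α-2) (|x'|² - C)`. Its Schur complement gives
`det D²w = 2^(n-1) t^(nα-2) K` with `K = α(1-α) C - (α² + α) |x'|²`.
The same `K` governs convexity: `D²w(v, v) = t^(α-2) (A vₙ² + 4α t ⟨x', v'⟩ vₙ + 2 t² |v'|²)`
with `A = α(1-α)(C - |x'|²)`, and by Cauchy–Schwarz this quadratic in `vₙ` has nonpositive
discriminant as soon as `K ≥ 0`. The choice of `C_α` makes `K ≥ 1` wherever `|x'| ≤ D`.
-/

open Finset Topology

theorem hessianMatrix_eq_of_hasFDerivAt {n : ℕ} {u : EuclideanSpace ℝ (Fin n) → ℝ}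
    {u' : EuclideanSpace ℝ (Fin n) → EuclideanSpace ℝ (Fin n) →L[ℝ] ℝ}
    {u'' : EuclideanSpace ℝ (Fin n) → EuclideanSpace ℝ (Fin n) →L[ℝ] ℝ}
    {x : EuclideanSpace ℝ (Fin n)} (hu : ∀ᶠ y in 𝓝 x, HasFDerivAt u (u' y) y)
    (hu' : ∀ v, HasFDerivAt (fun y => u' y v) (u'' v) x) :
    hessianMatrix u x =
      Matrix.of fun i j => u'' (EuclideanSpace.single j 1) (EuclideanSpace.single i 1) := by
  ext i j
  have hev : (fun y => fderiv ℝ u y (EuclideanSpace.single j 1)) =ᶠ[𝓝 x]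
      fun y => u' y (EuclideanSpace.single j 1) :=
    hu.mono fun y hy => by simp only [hy.fderiv]
  simp only [hessianMatrix, Matrix.of_apply, hev.fderiv_eq, (hu' _).fderiv]

theorem convexOn_of_hasFDerivAt2_nonneg {E : Type*} [NormedAddCommGroup E] [NormedSpace ℝ E]
    {s : Set E} {f : E → ℝ} {f' : E → E →L[ℝ] ℝ} {f'' : E → E → E →L[ℝ] ℝ}
    (hs : Convex ℝ s) (hs' : IsOpen s) (hf : ∀ x ∈ s, HasFDerivAt f (f' x) x)
    (hf' : ∀ x ∈ s, ∀ v, HasFDerivAt (fun y => f' y v) (f'' x v) x)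
    (hf'' : ∀ x ∈ s, ∀ v, 0 ≤ f'' x v v) : ConvexOn ℝ s f := by
  refine ⟨hs, fun x hx y hy a b ha hb hab => ?_⟩
  let ℓ := AffineMap.lineMap (k := ℝ) x y
  have hℓ : ∀ t, HasDerivAt ℓ (y - x) t := fun t => AffineMap.hasDerivAt_lineMap
  have hI : IsOpen (ℓ ⁻¹' s) := hs'.preimage AffineMap.lineMap_continuous
  have hg : ConvexOn ℝ (ℓ ⁻¹' s) (f ∘ ℓ) := by
    refine convexOn_of_hasDerivWithinAt2_nonneg (hs.affine_preimage ℓ)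
      (f' := fun t => f' (ℓ t) (y - x)) (f'' := fun t => f'' (ℓ t) (y - x) (y - x))
      (fun t ht => ((hf _ ht).comp_hasDerivAt t (hℓ t)).continuousAt.continuousWithinAt)
      ?_ ?_ ?_ <;> rw [hI.interior_eq] <;> intro t ht
    · exact ((hf _ ht).comp_hasDerivAt t (hℓ t)).hasDerivWithinAt
    · exact ((hf' _ ht (y - x)).comp_hasDerivAt t (hℓ t)).hasDerivWithinAt
    · exact hf'' _ ht _
  have h := hg.2 (x := 0) (y := 1) (by simpa [ℓ] using hx) (by simpa [ℓ] using hy) ha hb hab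
  simp only [Function.comp_apply, smul_eq_mul, mul_zero, mul_one, zero_add, ℓ,
    AffineMap.lineMap_apply_zero, AffineMap.lineMap_apply_one] at h
  rw [AffineMap.lineMap_apply_module, show 1 - b = a by linarith] at h
  simpa only [smul_eq_mul] using h

theorem quadratic_nonneg_of_discrim_le {A B V : ℝ} (hA : 0 ≤ A) (hV : 0 ≤ V)
    (hB : B ^ 2 ≤ A * V) (a : ℝ) : 0 ≤ A * a ^ 2 + 2 * B * a + V := by
  rcases hA.eq_or_lt with rfl | hA
  · have : B = 0 := by nlinarith
    subst this
    linarith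
  · have : 0 ≤ A * (A * a ^ 2 + 2 * B * a + V) := by
      nlinarith [sq_nonneg (A * a + B)]
    exact (mul_nonneg_iff_of_pos_left hA).mp this

section Arrowhead

variable {ι K : Type*} [Fintype ι] [DecidableEq ι]

def arrowheadMatrix [Zero K] (N : ι) (a : K) (b : ι → K) (c : K) : Matrix ι ι K :=
  Matrix.of fun i j =>
    if i = N then (if j = N then c else b j) else if j = N then b i else if i = j then a else 0

theorem det_arrowheadMatrix [Field K] (N : ι) {a : K} (ha : a ≠ 0) (b : ι → K) (c : K) :
    (arrowheadMatrix N a b c).det =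
      a ^ (Fintype.card ι - 1) * (c - a⁻¹ * ∑ i ∈ univ.erase N, b i ^ 2) := by
  let e : {i // i = N} ⊕ {i // ¬i = N} ≃ ι := Equiv.sumCompl (· = N)
  have hblocks : Matrix.reindex e.symm e.symm (arrowheadMatrix N a b c) =
      a • Matrix.fromBlocks (Matrix.of fun _ _ => a⁻¹ * c)
        (Matrix.of fun _ (j : {i // ¬i = N}) => a⁻¹ * b j)
        (Matrix.of fun (i : {i // ¬i = N}) _ => a⁻¹ * b i) 1 := by
    ext (⟨i, hi⟩ | ⟨i, hi⟩) (⟨j, hj⟩ | ⟨j, hj⟩) <;>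
      simp [e, arrowheadMatrix, Matrix.one_apply, hi, hj, ha, Subtype.ext_iff]
  rw [← Matrix.det_reindex_self e.symm, hblocks, Matrix.det_smul, Matrix.det_fromBlocks_one₂₂,
    Matrix.det_unique]
  simp only [Fintype.card_sum, Fintype.card_unique, Fintype.card_subtype_compl, Matrix.sub_apply,
    Matrix.of_apply, Matrix.mul_apply, Finset.sum_subtype (univ.erase N) (p := (¬· = N)) (by simp)]
  simp only [← sq, mul_pow, ← Finset.mul_sum, pow_add]
  field_simp

end Arrowhead

section Subsolution

variable {ι : Type*} [Fintype ι]

theorem hasFDerivAt_coord_rpow {N : ι} (β : ℝ) {x : EuclideanSpace ℝ ι} (hx : 0 < x N) :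
    HasFDerivAt (fun y : EuclideanSpace ℝ ι => y N ^ β)
      ((β * x N ^ (β - 1)) • EuclideanSpace.proj (𝕜 := ℝ) N) x :=
  (EuclideanSpace.proj (𝕜 := ℝ) N).hasFDerivAt.rpow_const (Or.inl hx.ne')

variable [DecidableEq ι] (N : ι)

/-- The paper's `x'`, encoded as `x` with its `N`-th coordinate set to zero. -/
noncomputable def tangentialProj : EuclideanSpace ℝ ι →L[ℝ] EuclideanSpace ℝ ι :=
  ContinuousLinearMap.id ℝ _ - (EuclideanSpace.proj N).smulRight (EuclideanSpace.single N 1)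

local notation "P" => tangentialProj N

@[simp]
theorem tangentialProj_apply (x : EuclideanSpace ℝ ι) (i : ι) :
    P x i = if i = N then 0 else x i := by
  by_cases h : i = N <;> simp [tangentialProj, h]

theorem tangentialProj_single (i : ι) :
    P (EuclideanSpace.single i 1) = if i = N then 0 else EuclideanSpace.single i 1 := by
  ext k
  by_cases h : i = N <;> by_cases h' : k = N <;> simp [h, h']

theorem norm_tangentialProj_sq (x : EuclideanSpace ℝ ι) :
    ‖P x‖ ^ 2 = ∑ i ∈ univ.erase N, x i ^ 2 := by
  rw [EuclideanSpace.norm_sq_eq, ← add_sum_erase _ _ (mem_univ N)]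
  simp only [tangentialProj_apply, if_true, norm_zero, zero_pow two_ne_zero, zero_add]
  exact sum_congr rfl fun i hi => by simp [ne_of_mem_erase hi]

def halfCylinder (D : ℝ) : Set (EuclideanSpace ℝ ι) := {x | 0 < x N ∧ ‖P x‖ < D}

theorem halfCylinder_eq_inter_preimage (D : ℝ) :
    halfCylinder N D = EuclideanSpace.proj (𝕜 := ℝ) N ⁻¹' Set.Ioi 0 ∩ P ⁻¹' ball 0 D := by
  ext x
  simp [halfCylinder]

theorem convex_halfCylinder (D : ℝ) : Convex ℝ (halfCylinder N D) := by
  rw [halfCylinder_eq_inter_preimage]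
  exact ((convex_Ioi 0).linear_preimage (EuclideanSpace.proj (𝕜 := ℝ) N).toLinearMap).inter
    ((convex_ball (0 : EuclideanSpace ℝ ι) D).linear_preimage (P).toLinearMap)

theorem isOpen_halfCylinder (D : ℝ) : IsOpen (halfCylinder N D) := by
  rw [halfCylinder_eq_inter_preimage]
  exact (isOpen_Ioi.preimage (EuclideanSpace.proj (𝕜 := ℝ) N).continuous).inter
    (isOpen_ball.preimage (P).continuous)

variable (α C : ℝ)

noncomputable def subsolution (x : EuclideanSpace ℝ ι) : ℝ :=
  x N ^ α * (‖P x‖ ^ 2 - C)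

noncomputable def subsolutionFDeriv (x : EuclideanSpace ℝ ι) : EuclideanSpace ℝ ι →L[ℝ] ℝ :=
  (2 * x N ^ α) • (innerSL ℝ (P x)).comp P +
    (α * x N ^ (α - 1) * (‖P x‖ ^ 2 - C)) • EuclideanSpace.proj N

noncomputable def subsolutionHess (x v : EuclideanSpace ℝ ι) : EuclideanSpace ℝ ι →L[ℝ] ℝ :=
  (2 * x N ^ α) • (innerSL ℝ (P v)).comp P +
    (2 * α * x N ^ (α - 1) * v N) • (innerSL ℝ (P x)).comp P +
    (2 * α * x N ^ (α - 1) * inner ℝ (P x) (P v) +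
      α * (α - 1) * x N ^ (α - 2) * (‖P x‖ ^ 2 - C) * v N) • EuclideanSpace.proj N

variable {N}

theorem hasFDerivAt_subsolution {x : EuclideanSpace ℝ ι} (hx : 0 < x N) :
    HasFDerivAt (subsolution N α C) (subsolutionFDeriv N α C x) x := by
  refine ((hasFDerivAt_coord_rpow α hx).fun_mul
    ((tangentialProj N).hasFDerivAt.norm_sq.sub_const C)).congr_fderiv ?_
  ext v
  simp only [subsolutionFDeriv, add_apply, smul_apply, ContinuousLinearMap.comp_apply,
    coe_innerSL_apply, nsmul_eq_mul, Nat.cast_ofNat, smul_eq_mul, PiLp.proj_apply]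
  ring

theorem hasFDerivAt_subsolutionFDeriv_apply {x : EuclideanSpace ℝ ι} (hx : 0 < x N)
    (v : EuclideanSpace ℝ ι) :
    HasFDerivAt (fun y => subsolutionFDeriv N α C y v) (subsolutionHess N α C x v) x := by
  have hinner : HasFDerivAt (fun y => inner ℝ (P y) (P v)) ((innerSL ℝ (P v)).comp P) x := by
    simp_rw [real_inner_comm (P v)]
    exact ((innerSL ℝ (P v)).comp P).hasFDerivAt
  have h := (((hasFDerivAt_coord_rpow α hx).const_mul 2).fun_mul hinner).fun_add
    ((((hasFDerivAt_coord_rpow (α - 1) hx).const_mul α).fun_mul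
      ((tangentialProj N).hasFDerivAt.norm_sq.sub_const C)).mul_const (v N))
  have hfun : (fun y => subsolutionFDeriv N α C y v) = fun y =>
      2 * y N ^ α * inner ℝ (P y) (P v) + α * y N ^ (α - 1) * (‖P y‖ ^ 2 - C) * v N := by
    ext y
    simp [subsolutionFDeriv]
  rw [hfun]
  refine h.congr_fderiv ?_
  ext u
  simp only [subsolutionHess, show α - 1 - 1 = α - 2 by ring, smul_add, add_apply, smul_apply,
    ContinuousLinearMap.comp_apply, coe_innerSL_apply, smul_eq_mul, PiLp.proj_apply,
    nsmul_eq_mul, Nat.cast_ofNat]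
  ring

theorem subsolutionHess_self_nonneg {α C : ℝ} {x : EuclideanSpace ℝ ι} (hx : 0 < x N)
    (hK : (α ^ 2 + α) * ‖P x‖ ^ 2 ≤ α * (1 - α) * C) (v : EuclideanSpace ℝ ι) :
    0 ≤ subsolutionHess N α C x v v := by
  set W := inner ℝ (P x) (P v)
  have hCS : W ^ 2 ≤ ‖P x‖ ^ 2 * ‖P v‖ ^ 2 := by
    rw [← sq_abs, ← mul_pow]
    exact pow_le_pow_left₀ (abs_nonneg W) (abs_real_inner_le_norm _ _) 2
  have hA : 0 ≤ α * (1 - α) * (C - ‖P x‖ ^ 2) := by nlinarith [sq_nonneg ‖P x‖]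
  have hB : (2 * α * x N * W) ^ 2 ≤
      α * (1 - α) * (C - ‖P x‖ ^ 2) * (2 * x N ^ 2 * ‖P v‖ ^ 2) := by
    nlinarith [mul_le_mul_of_nonneg_left hCS (by positivity : 0 ≤ 4 * α ^ 2 * x N ^ 2),
      mul_nonneg (sub_nonneg.mpr hK) (by positivity : 0 ≤ 2 * x N ^ 2 * ‖P v‖ ^ 2)]
  have hsplit : subsolutionHess N α C x v v = x N ^ (α - 2) *
      (α * (1 - α) * (C - ‖P x‖ ^ 2) * v N ^ 2 + 2 * (2 * α * x N * W) * v N +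
        2 * x N ^ 2 * ‖P v‖ ^ 2) := by
    have h1 : x N ^ (α - 1) = x N ^ (α - 2) * x N := by
      rw [← rpow_add_one hx.ne']; ring_nf
    have h2 : x N ^ α = x N ^ (α - 2) * x N ^ 2 := by
      rw [← rpow_natCast, ← rpow_add hx]; norm_num
    simp only [subsolutionHess, add_apply, smul_apply,
      ContinuousLinearMap.comp_apply, innerSL_apply_apply, real_inner_self_eq_norm_sq, h1, h2,
      smul_eq_mul, EuclideanSpace.proj, PiLp.proj_apply]
    ring
  rw [hsplit]
  exact mul_nonneg (rpow_nonneg hx.le _) (quadratic_nonneg_of_discrim_le hA (by positivity) hB _)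

theorem convexOn_subsolution {α C : ℝ} {s : Set (EuclideanSpace ℝ ι)} (hs : Convex ℝ s)
    (hs' : IsOpen s)
    (hsub : ∀ x ∈ s, 0 < x N ∧ (α ^ 2 + α) * ‖P x‖ ^ 2 ≤ α * (1 - α) * C) :
    ConvexOn ℝ s (subsolution N α C) :=
  convexOn_of_hasFDerivAt2_nonneg hs hs'
    (fun x hx => hasFDerivAt_subsolution α C (hsub x hx).1)
    (fun x hx => hasFDerivAt_subsolutionFDeriv_apply α C (hsub x hx).1)
    (fun x hx => subsolutionHess_self_nonneg (hsub x hx).1 (hsub x hx).2)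

end Subsolution

section Hessian

variable {n : ℕ} {N : Fin n} (α C : ℝ) {x : EuclideanSpace ℝ (Fin n)}

local notation "P" => tangentialProj N

theorem hessianMatrix_subsolution (hx : 0 < x N) :
    hessianMatrix (subsolution N α C) x =
      arrowheadMatrix N (2 * x N ^ α) (fun i => 2 * α * x N ^ (α - 1) * x i)
        (α * (α - 1) * x N ^ (α - 2) * (‖P x‖ ^ 2 - C)) := by
  have hopen : IsOpen {y : EuclideanSpace ℝ (Fin n) | 0 < y N} :=
    isOpen_Ioi.preimage (EuclideanSpace.proj (𝕜 := ℝ) N).continuous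
  rw [hessianMatrix_eq_of_hasFDerivAt ((hopen.eventually_mem hx).mono fun y hy =>
    hasFDerivAt_subsolution α C hy) (hasFDerivAt_subsolutionFDeriv_apply α C hx)]
  ext i j
  by_cases hi : i = N <;> by_cases hj : j = N <;>
    simp [subsolutionHess, arrowheadMatrix, tangentialProj_single, hi, hj,
      EuclideanSpace.inner_single_right, eq_comm (a := N)]


theorem hessianDet_subsolution (hx : 0 < x N) :
    hessianDet (subsolution N α C) x = 2 ^ (n - 1) * x N ^ ((n : ℝ) * α - 2) *
      (α * (1 - α) * C - (α ^ 2 + α) * ‖P x‖ ^ 2) := by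
  rw [hessianDet, hessianMatrix_subsolution α C hx, det_arrowheadMatrix N (by positivity),
    Fintype.card_fin]
  have hsum : ∑ i ∈ univ.erase N, (2 * α * x N ^ (α - 1) * x i) ^ 2 =
      4 * α ^ 2 * (x N ^ (α - 1)) ^ 2 * ‖P x‖ ^ 2 := by
    rw [norm_tangentialProj_sq, mul_sum]
    exact sum_congr rfl fun i _ => by ring
  have h1 : x N ^ (α - 1) = x N ^ α / x N := by rw [rpow_sub hx, rpow_one]
  have h2 : x N ^ (α - 2) = x N ^ α / x N ^ 2 := by rw [rpow_sub hx, rpow_two]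
  have h3 : x N ^ ((n : ℝ) * α - 2) = (x N ^ α) ^ (n - 1) * x N ^ α / x N ^ 2 := by
    rw [rpow_sub hx, rpow_two, mul_comm, rpow_mul hx.le, rpow_natCast, ← pow_succ,
      Nat.sub_add_cancel N.pos]
  rw [hsum, h1, h2, h3]
  field_simp
  ring

end Hessian

theorem one_le_hessianDet_factor {α C D S : ℝ} (hα0 : 0 < α) (hα1 : α < 1)
    (hC : C = (1 + 2 * D ^ 2) / (α * (1 - α))) (hS0 : 0 ≤ S) (hS : S ≤ D ^ 2) :
    1 ≤ α * (1 - α) * C - (α ^ 2 + α) * S := by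
  have hαC : α * (1 - α) * C = 1 + 2 * D ^ 2 := by
    rw [hC, mul_div_cancel₀]
    exact (mul_pos hα0 (by linarith)).ne'
  nlinarith [mul_le_mul_of_nonneg_right (show α ^ 2 + α ≤ 2 by nlinarith) hS0]

/-- The subsolution `w_α(x) = xₙ^α (|x'|² - C_α)`: explicit
Hessian determinant, lower bound, and convexity on `{xₙ > 0, |x'| < D}`. -/
theorem stmt_10 (n : ℕ) (hn : 2 ≤ n) (α D : ℝ)
    (hα0 : 0 < α) (hα1 : α < 1)
    (Cα : ℝ) (hCα : Cα = (1 + 2 * D ^ 2) / (α * (1 - α)))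
    (wα : EuclideanSpace ℝ (Fin n) → ℝ)
    (hwα : wα = fun x => x ⟨n - 1, by omega⟩ ^ α *
        ((∑ i ∈ Finset.univ.erase (⟨n - 1, by omega⟩ : Fin n), x i ^ 2) - Cα)) :
    (∀ x : EuclideanSpace ℝ (Fin n), 0 < x ⟨n - 1, by omega⟩ →
      hessianDet wα x = (2 : ℝ) ^ (n - 1) * x ⟨n - 1, by omega⟩ ^ ((n : ℝ) * α - 2) *
        (α * (1 - α) * Cα - (α ^ 2 + α) *
          ∑ i ∈ Finset.univ.erase (⟨n - 1, by omega⟩ : Fin n), x i ^ 2)) ∧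
    (∀ x : EuclideanSpace ℝ (Fin n), 0 < x ⟨n - 1, by omega⟩ →
      Real.sqrt (∑ i ∈ Finset.univ.erase (⟨n - 1, by omega⟩ : Fin n), x i ^ 2) ≤ D →
      hessianDet wα x ≥ x ⟨n - 1, by omega⟩ ^ ((n : ℝ) * α - 2)) ∧
    ConvexOn ℝ {x : EuclideanSpace ℝ (Fin n) | 0 < x ⟨n - 1, by omega⟩ ∧
      Real.sqrt (∑ i ∈ Finset.univ.erase (⟨n - 1, by omega⟩ : Fin n), x i ^ 2) < D} wα := by
  set N : Fin n := ⟨n - 1, by omega⟩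
  have hS (x : EuclideanSpace ℝ (Fin n)) : ∑ i ∈ univ.erase N, x i ^ 2 = ‖tangentialProj N x‖ ^ 2 :=
    (norm_tangentialProj_sq N x).symm
  have hw : wα = subsolution N α Cα := by
    rw [hwα]
    funext x
    rw [subsolution, hS]
  have hfactor (x : EuclideanSpace ℝ (Fin n)) (hxD : ‖tangentialProj N x‖ ≤ D) :
      1 ≤ α * (1 - α) * Cα - (α ^ 2 + α) * ‖tangentialProj N x‖ ^ 2 :=
    one_le_hessianDet_factor hα0 hα1 hCα (sq_nonneg _) (pow_le_pow_left₀ (norm_nonneg _) hxD 2)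
  simp only [hS, sqrt_sq_eq_abs, abs_norm]
  subst hw
  refine ⟨fun x hx => hessianDet_subsolution α Cα hx, fun x hx hxD => ?_, ?_⟩
  · rw [hessianDet_subsolution α Cα hx]
    calc x N ^ ((n : ℝ) * α - 2) = 1 * x N ^ ((n : ℝ) * α - 2) * 1 := by ring
      _ ≤ _ := by gcongr; exacts [one_le_pow₀ one_le_two, hfactor x hxD]
  · exact convexOn_subsolution (convex_halfCylinder N D) (isOpen_halfCylinder N D)
      fun x hx => ⟨hx.1, by linarith [hfactor x hx.2.le]⟩
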